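/- arXiv:1502.07170 — 2 statements merged into one kernel-verified Lean document; each statement's English description precedes it below -/
import Mathlib

section
/- Let n ≥ 1 and let φ, f ∈ 𝒮(ℝⁿ) with φ ≠ 0. Then for all (x,ξ) ∈ ℝⁿ × ℝⁿ one has W_φ[Δf](x,ξ) = W_{Δφ} f(x,ξ) + 2 i ξ · ∇_x (W_φ f)(x,ξ) − |ξ|² W_φ f(x,ξ), where Δ denotes the Laplacian on ℝⁿ and ∇_x is the gradient of W_φ f(x,ξ) in the x-variable. -/
open MeasureTheory Complex Filter
open scoped RealInnerProductSpace ENNReal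

noncomputable section

/-- Euclidean space ℝⁿ. -/
abbrev Euc (n : ℕ) := EuclideanSpace ℝ (Fin n)

/-- Wave packet transform: `W_φ f (x, ξ) = ∫ conj (φ (y - x)) f y e^{-i y·ξ} dy`. -/
def wpt {n : ℕ} (φ f : Euc n → ℂ) (x ξ : Euc n) : ℂ :=
  ∫ y, (starRingEnd ℂ) (φ (y - x)) * f y * Complex.exp (-(Complex.I) * Complex.ofReal ⟪y, ξ⟫)

/-- The `j`-th partial derivative of a Schwartz function. -/
def pderivS {n : ℕ} (j : Fin n) (f : SchwartzMap (Euc n) ℂ) : SchwartzMap (Euc n) ℂ :=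
  LineDeriv.lineDerivOpCLM ℝ (SchwartzMap (Euc n) ℂ) (EuclideanSpace.single j (1 : ℝ)) f

/-- The Laplacian `Δ = ∑_j ∂_j²` of a Schwartz function. -/
def lapS {n : ℕ} (f : SchwartzMap (Euc n) ℂ) : SchwartzMap (Euc n) ℂ :=
  ∑ j : Fin n, pderivS j (pderivS j f)


/-!
Write `W_φ f (x, ξ) = ∫ conj φ (y - x) · (f y · e^{-i⟪y, ξ⟫}) dy`, a correlation of the Schwartz
function `conj φ` with the modulated integrable function `f · e^{-i⟪·, ξ⟫}`. Differentiating under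
the integral sign gives `∂_{x,v} W_φ f = -W_{∂_v φ} f`, and integrating by parts, where the
derivative of the modulation contributes `-i⟪v, ξ⟫`, gives
`W_φ[∂_v f] = i⟪v, ξ⟫ W_φ f - W_{∂_v φ} f`. Applying the latter twice along each coordinate
direction and summing gives the formula for the Laplacian.
-/

open SchwartzMap LineDeriv

theorem HasLineDerivAt.mul {𝕜 𝔸 E : Type*} [NontriviallyNormedField 𝕜] [NormedRing 𝔸]
    [NormedAlgebra 𝕜 𝔸] [AddCommGroup E] [Module 𝕜 E] {f g : E → 𝔸} {f' g' : 𝔸} {x v : E}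
    (hf : HasLineDerivAt 𝕜 f f' x v) (hg : HasLineDerivAt 𝕜 g g' x v) :
    HasLineDerivAt 𝕜 (fun y => f y * g y) (f' * g x + f x * g') x v := by
  simpa [HasLineDerivAt] using hf.fun_mul hg

namespace SchwartzMap

variable {E : Type*} [NormedAddCommGroup E] [NormedSpace ℝ E]

def conj (φ : 𝓢(E, ℂ)) : 𝓢(E, ℂ) :=
  postcompCLM (Complex.conjCLE : ℂ →L[ℝ] ℂ) φ

@[simp]
lemma conj_apply (φ : 𝓢(E, ℂ)) (y : E) : φ.conj y = starRingEnd ℂ (φ y) := rfl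

lemma lineDerivOp_conj (φ : 𝓢(E, ℂ)) (v : E) : ∂_{v} φ.conj = (∂_{v} φ).conj := by
  ext y
  simp only [lineDerivOp_apply_eq_fderiv, conj, postcompCLM_apply]
  exact congrArg (· v) (Complex.conjCLE.comp_fderiv (f := φ) (x := y))

lemma hasLineDerivAt_comp_sub {F : Type*} [NormedAddCommGroup F] [NormedSpace ℝ F]
    (ψ : 𝓢(E, F)) (x y v : E) :
    HasLineDerivAt ℝ (fun y => ψ (y - x)) (∂_{v} ψ (y - x)) y v := by
  simpa [HasLineDerivAt, sub_add_eq_add_sub, lineDerivOp_apply_eq_fderiv] using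
    (ψ.hasFDerivAt (y - x)).hasLineDerivAt v

lemma norm_fderiv_le_seminorm (ψ : 𝓢(E, ℂ)) (z : E) :
    ‖fderiv ℝ ψ z‖ ≤ SchwartzMap.seminorm ℝ 0 0 (fderivCLM ℝ E ℂ ψ) :=
  (fderivCLM ℝ E ℂ ψ).norm_le_seminorm ℝ z

variable [MeasurableSpace E] [BorelSpace E] {μ : Measure E} {g : E → ℂ}

lemma integrable_comp_sub_mul (ψ : 𝓢(E, ℂ)) (hg : Integrable g μ) (x : E) :
    Integrable (fun y => ψ (y - x) * g y) μ :=
  hg.bdd_mul (ψ.continuous.comp (continuous_sub_right x)).aestronglyMeasurable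
    (ae_of_all _ fun _ => ψ.norm_le_seminorm ℝ _)

variable [FiniteDimensional ℝ E]

lemma integrable_smul_fderiv_comp_sub (ψ : 𝓢(E, ℂ)) (hg : Integrable g μ) (x : E) :
    Integrable (fun y => g y • fderiv ℝ ψ (y - x)) μ := by
  have hcont : Continuous fun y => fderiv ℝ ψ (y - x) :=
    (fderivCLM ℝ E ℂ ψ).continuous.comp (continuous_sub_right x)
  refine (hg.norm.mul_const (SchwartzMap.seminorm ℝ 0 0 (fderivCLM ℝ E ℂ ψ))).mono'
    (hg.1.smul hcont.aestronglyMeasurable) (ae_of_all _ fun y => ?_)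
  rw [norm_smul]
  exact mul_le_mul_of_nonneg_left (ψ.norm_fderiv_le_seminorm _) (norm_nonneg _)

lemma hasFDerivAt_integral_comp_sub_mul (ψ : 𝓢(E, ℂ)) (hg : Integrable g μ) (x : E) :
    HasFDerivAt (fun x => ∫ y, ψ (y - x) * g y ∂μ) (-∫ y, g y • fderiv ℝ ψ (y - x) ∂μ) x := by
  rw [← integral_neg]
  refine hasFDerivAt_integral_of_dominated_of_fderiv_le
    (F' := fun x y => -(g y • fderiv ℝ ψ (y - x)))
    (bound := fun y => ‖g y‖ * SchwartzMap.seminorm ℝ 0 0 (fderivCLM ℝ E ℂ ψ)) univ_mem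
    (Eventually.of_forall fun x' => (ψ.integrable_comp_sub_mul hg x').1)
    (ψ.integrable_comp_sub_mul hg x) (ψ.integrable_smul_fderiv_comp_sub hg x).neg.1
    (ae_of_all _ fun y x' _ => ?_) (hg.norm.mul_const _) (ae_of_all _ fun y x' _ => ?_)
  · rw [norm_neg, norm_smul]
    exact mul_le_mul_of_nonneg_left (ψ.norm_fderiv_le_seminorm _) (norm_nonneg _)
  · have hval : -(g y • fderiv ℝ ψ (y - x'))
        = g y • (fderiv ℝ ψ (y - x')).comp (-ContinuousLinearMap.id ℝ E) := by
      ext v; simp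
    rw [hval]
    exact ((ψ.hasFDerivAt (y - x')).comp x' ((hasFDerivAt_id x').const_sub y)).mul_const (g y)

lemma fderiv_integral_comp_sub_mul_apply (ψ : 𝓢(E, ℂ)) (hg : Integrable g μ) (x v : E) :
    fderiv ℝ (fun x => ∫ y, ψ (y - x) * g y ∂μ) x v = -∫ y, ∂_{v} ψ (y - x) * g y ∂μ := by
  rw [(ψ.hasFDerivAt_integral_comp_sub_mul hg x).fderiv, neg_apply,
    ContinuousLinearMap.integral_apply (ψ.integrable_smul_fderiv_comp_sub hg x)]
  simp [lineDerivOp_apply_eq_fderiv, mul_comm]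

end SchwartzMap

namespace WavePacket

variable {n : ℕ}

def planeWave (ξ y : Euc n) : ℂ := Complex.exp (-Complex.I * ⟪y, ξ⟫)

lemma norm_planeWave (ξ y : Euc n) : ‖planeWave ξ y‖ = 1 := by
  simp [planeWave, Complex.norm_exp]

lemma continuous_planeWave (ξ : Euc n) : Continuous (planeWave ξ) := by
  unfold planeWave; fun_prop

lemma hasLineDerivAt_planeWave (ξ y v : Euc n) :
    HasLineDerivAt ℝ (planeWave ξ) (-Complex.I * ⟪v, ξ⟫ * planeWave ξ y) y v := by
  have hinner : HasDerivAt (fun t : ℝ => (⟪y + t • v, ξ⟫ : ℂ)) (⟪v, ξ⟫ : ℂ) 0 := by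
    simp only [inner_add_left, inner_smul_left, RCLike.conj_to_real, Complex.ofReal_add,
      Complex.ofReal_mul]
    simpa using ((hasDerivAt_id (0 : ℝ)).ofReal_comp.mul_const (⟪v, ξ⟫ : ℂ)).const_add
      (⟪y, ξ⟫ : ℂ)
  simpa [HasLineDerivAt, planeWave, mul_comm, mul_left_comm, mul_assoc] using
    (hinner.const_mul (-Complex.I)).cexp

lemma integrable_mul_planeWave {f : Euc n → ℂ} (hf : Integrable f) (ξ : Euc n) :
    Integrable fun y => f y * planeWave ξ y :=
  hf.mul_bdd (continuous_planeWave ξ).aestronglyMeasurable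
    (ae_of_all _ fun y => (norm_planeWave ξ y).le)

lemma wpt_eq_integral (φ f : 𝓢(Euc n, ℂ)) (x ξ : Euc n) :
    wpt φ f x ξ = ∫ y, φ.conj (y - x) * (f y * planeWave ξ y) := by
  simp only [wpt, planeWave, conj_apply, mul_assoc]

lemma wpt_lineDerivOp_right (φ f : 𝓢(Euc n, ℂ)) (v x ξ : Euc n) :
    wpt φ (∂_{v} f : 𝓢(Euc n, ℂ)) x ξ
      = Complex.I * ⟪v, ξ⟫ * wpt φ f x ξ - wpt (∂_{v} φ : 𝓢(Euc n, ℂ)) f x ξ := by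
  set c : ℂ := ((⟪v, ξ⟫ : ℝ) : ℂ)
  have hmod : ∀ y, HasLineDerivAt ℝ (fun y => f y * planeWave ξ y)
      (∂_{v} f y * planeWave ξ y + f y * (-Complex.I * c * planeWave ξ y)) y v := fun y =>
    ((f.hasFDerivAt y).hasLineDerivAt v).mul (hasLineDerivAt_planeWave ξ y v)
  have hsplit : ∀ y, φ.conj (y - x) * (∂_{v} f y * planeWave ξ y
        + f y * (-Complex.I * c * planeWave ξ y))
      = φ.conj (y - x) * (∂_{v} f y * planeWave ξ y)
        - Complex.I * c * (φ.conj (y - x) * (f y * planeWave ξ y)) := fun y => by ring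
  have hint : ∀ (ψ g : 𝓢(Euc n, ℂ)), Integrable fun y => ψ (y - x) * (g y * planeWave ξ y) :=
    fun ψ g => ψ.integrable_comp_sub_mul (integrable_mul_planeWave g.integrable ξ) x
  have ibp := integral_bilinear_hasLineDerivAt_right_eq_neg_left_of_integrable
    (B := ContinuousLinearMap.mul ℝ ℂ) (μ := volume) (hint _ f)
    (by simp only [ContinuousLinearMap.mul_apply', hsplit]
        exact (hint φ.conj (∂_{v} f)).sub ((hint φ.conj f).const_mul _))
    (hint _ f) (fun y _ => φ.conj.hasLineDerivAt_comp_sub x y v) (fun y _ => hmod y)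
  simp only [ContinuousLinearMap.mul_apply', hsplit, lineDerivOp_conj] at ibp
  rw [integral_sub (hint _ _) ((hint _ _).const_mul _), integral_const_mul] at ibp
  simp only [wpt_eq_integral]
  linear_combination ibp

lemma fderiv_wpt_apply (φ f : 𝓢(Euc n, ℂ)) (x ξ v : Euc n) :
    fderiv ℝ (fun x' => wpt φ f x' ξ) x v = -wpt (∂_{v} φ : 𝓢(Euc n, ℂ)) f x ξ := by
  simp only [wpt_eq_integral, ← lineDerivOp_conj]
  exact φ.conj.fderiv_integral_comp_sub_mul_apply (integrable_mul_planeWave f.integrable ξ) x v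

lemma wpt_lineDerivOp_lineDerivOp_right (φ f : 𝓢(Euc n, ℂ)) (v x ξ : Euc n) :
    wpt φ (∂_{v} (∂_{v} f) : 𝓢(Euc n, ℂ)) x ξ
      = wpt (∂_{v} (∂_{v} φ) : 𝓢(Euc n, ℂ)) f x ξ
        - 2 * Complex.I * ⟪v, ξ⟫ * wpt (∂_{v} φ : 𝓢(Euc n, ℂ)) f x ξ
        - (⟪v, ξ⟫ : ℂ) ^ 2 * wpt φ f x ξ := by
  rw [wpt_lineDerivOp_right, wpt_lineDerivOp_right, wpt_lineDerivOp_right]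
  linear_combination ((⟪v, ξ⟫ : ℂ) ^ 2 * wpt φ f x ξ) * Complex.I_sq

lemma wpt_sum_right {ι : Type*} (s : Finset ι) (φ : 𝓢(Euc n, ℂ)) (g : ι → 𝓢(Euc n, ℂ))
    (x ξ : Euc n) :
    wpt φ ⇑(∑ i ∈ s, g i) x ξ = ∑ i ∈ s, wpt φ (g i) x ξ := by
  simp only [wpt_eq_integral, sum_apply, Finset.sum_mul, Finset.mul_sum]
  exact integral_finsetSum s fun i _ =>
    φ.conj.integrable_comp_sub_mul (integrable_mul_planeWave (g i).integrable ξ) x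

lemma wpt_sum_left {ι : Type*} (s : Finset ι) (g : ι → 𝓢(Euc n, ℂ)) (f : 𝓢(Euc n, ℂ))
    (x ξ : Euc n) :
    wpt ⇑(∑ i ∈ s, g i) f x ξ = ∑ i ∈ s, wpt (g i) f x ξ := by
  simp only [wpt_eq_integral, conj_apply, sum_apply, map_sum, Finset.sum_mul]
  exact integral_finsetSum s fun i _ =>
    (g i).conj.integrable_comp_sub_mul (integrable_mul_planeWave f.integrable ξ) x

end WavePacket

open WavePacket in
theorem stmt2_general {n : ℕ} (φ f : SchwartzMap (Euc n) ℂ)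
    (x ξ : Euc n) :
    wpt ⇑φ ⇑(lapS f) x ξ
      = wpt ⇑(lapS φ) ⇑f x ξ
        + 2 * Complex.I * ∑ j : Fin n, (ξ j : ℂ) *
            fderiv ℝ (fun x' => wpt ⇑φ ⇑f x' ξ) x (EuclideanSpace.single j (1 : ℝ))
        - Complex.ofReal (‖ξ‖ ^ 2) * wpt ⇑φ ⇑f x ξ := by
  have hnorm : ((‖ξ‖ ^ 2 : ℝ) : ℂ) = ∑ j, (ξ j : ℂ) ^ 2 := by
    rw [EuclideanSpace.real_norm_sq_eq]; push_cast; rfl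
  simp only [lapS, pderivS, lineDerivOpCLM_apply, wpt_sum_right, wpt_sum_left,
    wpt_lineDerivOp_lineDerivOp_right, fderiv_wpt_apply, EuclideanSpace.inner_single_left,
    map_one, one_mul, hnorm, Finset.mul_sum, Finset.sum_mul, ← Finset.sum_add_distrib,
    ← Finset.sum_sub_distrib]
  exact Finset.sum_congr rfl fun j _ => by ring

/-- for Schwartz `φ ≠ 0` and Schwartz `f`,
`W_φ[Δf](x,ξ) = W_{Δφ} f(x,ξ) + 2 i ξ·∇_x (W_φ f)(x,ξ) − |ξ|² W_φ f(x,ξ)`. -/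
theorem stmt2 {n : ℕ} (hn : 1 ≤ n) (φ f : SchwartzMap (Euc n) ℂ) (hφ : φ ≠ 0)
    (x ξ : Euc n) :
    wpt ⇑φ ⇑(lapS f) x ξ
      = wpt ⇑(lapS φ) ⇑f x ξ
        + 2 * Complex.I * ∑ j : Fin n, (ξ j : ℂ) *
            fderiv ℝ (fun x' => wpt ⇑φ ⇑f x' ξ) x (EuclideanSpace.single j (1 : ℝ))
        - Complex.ofReal (‖ξ‖ ^ 2) * wpt ⇑φ ⇑f x ξ :=
  stmt2_general φ f x ξ
end
end

section
/- Let n ≥ 1, let φ₀ ∈ 𝒮(ℝⁿ) be a nonzero Schwartz function, let ψ ∈ 𝒮(ℝⁿ), and let t ∈ ℝ. Then for all (x,ξ) ∈ ℝⁿ × ℝⁿ one has W_{e^{−itH₀}φ₀}[ e^{−itH₀}ψ ](x,ξ) = e^{−i t |ξ|²/2} W_{φ₀}ψ(x − tξ, ξ). -/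
open MeasureTheory Complex Filter
open scoped RealInnerProductSpace ENNReal

noncomputable section

/-- Fourier transform `ℱf(ξ) = ∫ e^{−i x·ξ} f(x) dx`. -/
def FT {n : ℕ} (f : Euc n → ℂ) (ξ : Euc n) : ℂ :=
  ∫ x, Complex.exp (-(Complex.I) * Complex.ofReal ⟪x, ξ⟫) * f x

/-- Free Schrödinger evolution `e^{−itH₀}f = ℱ⁻¹(e^{−it|ξ|²/2} ℱf)`, `H₀ = −½Δ`. -/
def freeEv {n : ℕ} (t : ℝ) (f : Euc n → ℂ) (x : Euc n) : ℂ :=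
  (Complex.ofReal ((2 * Real.pi) ^ n))⁻¹ *
    ∫ ξ, Complex.exp (Complex.I * Complex.ofReal ⟪x, ξ⟫) *
      (Complex.exp (-(Complex.I) * (t : ℂ) * Complex.ofReal (‖ξ‖ ^ 2) / 2) * FT f ξ)

/-!
On the Fourier side `e^{-itH₀}` is multiplication by `m_t(η) = e^{-it|η|²/2}`, and Fourier
inversion together with Fubini gives
`W_φ ψ (x, ξ) = (2π)^{-n} ∫ conj (φ̂ η) e^{i x·η} ψ̂ (η + ξ) dη`.
Evolving `φ` and `ψ` multiplies this integrand by `conj (m_t η) m_t (η + ξ) = m_t ξ e^{-i t ξ·η}`: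
the constant phase `m_t ξ` and the shift `x ↦ x - t ξ`.
-/

open Real
open scoped FourierTransform SchwartzMap ComplexConjugate

theorem iteratedDeriv_cexp_ofReal_mul_I (k : ℕ) :
    iteratedDeriv k (fun s : ℝ => cexp (s * I)) = fun s : ℝ => I ^ k * cexp (s * I) := by
  induction k with
  | zero => simp
  | succ k ih =>
    ext s
    have h : HasDerivAt (fun s : ℝ => cexp (s * I)) (cexp (s * I) * (1 * I)) s :=
      ((hasDerivAt_id s).ofReal_comp.mul_const I).cexp
    rw [iteratedDeriv_succ, ih, deriv_const_mul _ h.differentiableAt, h.deriv]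
    ring

theorem hasTemperateGrowth_cexp_ofReal_mul_I :
    (fun s : ℝ => cexp (s * I)).HasTemperateGrowth := by
  refine ⟨(ofRealCLM.contDiff.mul contDiff_const).cexp, fun k => ⟨0, 1, fun s => ?_⟩⟩
  rw [norm_iteratedFDeriv_eq_norm_iteratedDeriv, iteratedDeriv_cexp_ofReal_mul_I]
  simp [Complex.norm_exp_ofReal_mul_I]

section

variable {E : Type*} [NormedAddCommGroup E]

def freeSymbol (t : ℝ) (ξ : E) : ℂ :=
  cexp (-I * t * (‖ξ‖ ^ 2 : ℝ) / 2)

theorem freeSymbol_eq_cexp_ofReal_mul_I (t : ℝ) (ξ : E) :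
    freeSymbol t ξ = cexp ((-(t / 2) * ‖ξ‖ ^ 2 : ℝ) * I) := by
  rw [freeSymbol]
  push_cast
  ring_nf

theorem hasTemperateGrowth_freeSymbol [InnerProductSpace ℝ E] (t : ℝ) :
    (freeSymbol (E := E) t).HasTemperateGrowth := by
  simp_rw [funext (freeSymbol_eq_cexp_ofReal_mul_I t)]
  exact hasTemperateGrowth_cexp_ofReal_mul_I.comp (f := fun ξ : E => -(t / 2) * ‖ξ‖ ^ 2)
    (by fun_prop)

theorem conj_freeSymbol_mul_freeSymbol_add_mul_cexp [InnerProductSpace ℝ E] (t : ℝ) (x ξ η : E) :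
    conj (freeSymbol t η) * freeSymbol t (η + ξ) * cexp (I * ⟪x, η⟫)
      = freeSymbol t ξ * cexp (I * ⟪x - t • ξ, η⟫) := by
  rw [freeSymbol, freeSymbol, freeSymbol, ← Complex.exp_conj, ← Complex.exp_add,
    ← Complex.exp_add, ← Complex.exp_add]
  congr 1
  simp only [map_div₀, map_mul, map_neg, Complex.conj_I, Complex.conj_ofReal, map_ofNat,
    norm_add_sq_real, inner_sub_left, real_inner_smul_left, real_inner_comm ξ η]
  push_cast
  ring

end

section

variable {n : ℕ}

theorem FT_eq_fourier (f : Euc n → ℂ) (ξ : Euc n) : FT f ξ = 𝓕 f ((2 * π)⁻¹ • ξ) := by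
  rw [Real.fourier_eq', FT]
  congr 1 with x
  rw [real_inner_smul_right, smul_eq_mul]
  congr 2
  field_simp
  push_cast
  ring

theorem FT_two_pi_smul (f : Euc n → ℂ) (w : Euc n) : FT f ((2 * π) • w) = 𝓕 f w := by
  rw [FT_eq_fourier, smul_smul, inv_mul_cancel₀ (by positivity), one_smul]

theorem fourierInv_comp_two_pi_smul (g : Euc n → ℂ) (z : Euc n) :
    𝓕⁻ (fun w => g ((2 * π) • w)) z
      = (((2 * π) ^ n : ℝ) : ℂ)⁻¹ * ∫ η, cexp (I * ⟪z, η⟫) * g η := by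
  have hscale := Measure.integral_comp_smul_of_nonneg volume
    (fun η => cexp (I * ⟪z, η⟫) * g η) (2 * π) (hR := by positivity)
  rw [finrank_euclideanSpace_fin, Complex.real_smul, Complex.ofReal_inv] at hscale
  rw [Real.fourierInv_eq', ← hscale]
  congr 1 with w
  rw [smul_eq_mul, real_inner_smul_right, real_inner_comm]
  push_cast
  ring_nf

theorem freeEv_eq_fourierInv (t : ℝ) (f : Euc n → ℂ) :
    freeEv t f = 𝓕⁻ (fun w => freeSymbol t ((2 * π) • w) * 𝓕 f w) := by
  ext z
  simp_rw [← FT_two_pi_smul f, fourierInv_comp_two_pi_smul (fun η => freeSymbol t η * FT f η)]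
  rfl

theorem eq_integral_FT (f : 𝓢(Euc n, ℂ)) (z : Euc n) :
    f z = (((2 * π) ^ n : ℝ) : ℂ)⁻¹ * ∫ η, cexp (I * ⟪z, η⟫) * FT f η := by
  rw [← fourierInv_comp_two_pi_smul]
  simp_rw [FT_two_pi_smul]
  rw [← SchwartzMap.fourier_coe, ← SchwartzMap.fourierInv_coe,
    FourierTransform.fourierInv_fourier_eq]

def freeEvSchwartz (t : ℝ) (f : 𝓢(Euc n, ℂ)) : 𝓢(Euc n, ℂ) :=
  𝓕⁻ (SchwartzMap.smulLeftCLM ℂ (fun w : Euc n => freeSymbol t ((2 * π) • w)) (𝓕 f))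

theorem fourier_freeEvSchwartz (t : ℝ) (f : 𝓢(Euc n, ℂ)) (w : Euc n) :
    𝓕 (freeEvSchwartz t f) w = freeSymbol t ((2 * π) • w) * 𝓕 f w := by
  have h : (fun w : Euc n => freeSymbol t ((2 * π) • w)).HasTemperateGrowth :=
    (hasTemperateGrowth_freeSymbol t).comp (by fun_prop)
  rw [freeEvSchwartz, FourierTransform.fourier_fourierInv_eq,
    SchwartzMap.smulLeftCLM_apply_apply h, smul_eq_mul]

theorem coe_freeEvSchwartz (t : ℝ) (f : 𝓢(Euc n, ℂ)) : ⇑(freeEvSchwartz t f) = freeEv t f := by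
  rw [freeEv_eq_fourierInv, ← SchwartzMap.fourier_coe, ← funext (fourier_freeEvSchwartz t f),
    ← SchwartzMap.fourierInv_coe, FourierTransform.fourierInv_fourier_eq]

theorem FT_freeEvSchwartz (t : ℝ) (f : 𝓢(Euc n, ℂ)) (ξ : Euc n) :
    FT (freeEvSchwartz t f) ξ = freeSymbol t ξ * FT f ξ := by
  rw [FT_eq_fourier, FT_eq_fourier, ← SchwartzMap.fourier_coe,
    fourier_freeEvSchwartz, smul_smul, mul_inv_cancel₀ (by positivity), one_smul,
    SchwartzMap.fourier_coe]

theorem continuous_FT (f : 𝓢(Euc n, ℂ)) : Continuous (FT f) := by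
  rw [funext (FT_eq_fourier f), ← SchwartzMap.fourier_coe]
  exact (𝓕 f).continuous.comp (continuous_const_smul _)

theorem integrable_FT (f : 𝓢(Euc n, ℂ)) : Integrable (FT f) := by
  rw [funext (FT_eq_fourier f), ← SchwartzMap.fourier_coe]
  exact (𝓕 f).integrable.comp_smul (inv_ne_zero (by positivity))

theorem conj_eq_integral_FT (f : 𝓢(Euc n, ℂ)) (z : Euc n) :
    conj (f z) = (((2 * π) ^ n : ℝ) : ℂ)⁻¹ * ∫ η, cexp (-I * ⟪z, η⟫) * conj (FT f η) := by
  rw [eq_integral_FT, map_mul, map_inv₀, Complex.conj_ofReal, ← integral_conj]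
  simp only [map_mul, ← Complex.exp_conj, Complex.conj_I, Complex.conj_ofReal, neg_mul]

theorem wpt_eq_integral_FT (φ ψ : 𝓢(Euc n, ℂ)) (x ξ : Euc n) :
    wpt φ ψ x ξ = (((2 * π) ^ n : ℝ) : ℂ)⁻¹ *
      ∫ η, conj (FT φ η) * cexp (I * ⟪x, η⟫) * FT ψ (η + ξ) := by
  set G : Euc n → Euc n → ℂ := fun y η =>
    cexp (-I * ⟪y - x, η⟫) * conj (FT φ η) * (ψ y * cexp (-I * ⟪y, ξ⟫))
  have hG : Integrable (Function.uncurry G) (volume.prod volume) := by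
    refine (ψ.integrable.mul_prod (integrable_FT φ)).mono ?_ (ae_of_all _ fun p => ?_)
    · have hFT := continuous_FT φ
      exact Continuous.aestronglyMeasurable (by fun_prop)
    · simp [G, Function.uncurry, Complex.norm_exp, mul_comm]
  calc wpt φ ψ x ξ = ∫ y, (((2 * π) ^ n : ℝ) : ℂ)⁻¹ * ∫ η, G y η := by
        rw [wpt]
        congr 1 with y
        rw [conj_eq_integral_FT, mul_assoc, mul_assoc, ← integral_mul_const]
    _ = (((2 * π) ^ n : ℝ) : ℂ)⁻¹ * ∫ η, ∫ y, G y η := by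
        rw [integral_const_mul, integral_integral_swap hG]
    _ = _ := by
        congr 1
        refine integral_congr_ae (ae_of_all _ fun η => ?_)
        dsimp only
        rw [FT.eq_1 ψ, ← integral_const_mul]
        refine integral_congr_ae (ae_of_all _ fun y => ?_)
        have phase : cexp (-I * ⟪y - x, η⟫) * cexp (-I * ⟪y, ξ⟫)
            = cexp (I * ⟪x, η⟫) * cexp (-I * ⟪y, η + ξ⟫) := by
          rw [← Complex.exp_add, ← Complex.exp_add, inner_sub_left, inner_add_right]
          push_cast
          ring_nf
        linear_combination conj (FT φ η) * ψ y * phase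

end

theorem stmt8_general {n : ℕ} (φ₀ : SchwartzMap (Euc n) ℂ)
    (ψ : SchwartzMap (Euc n) ℂ) (t : ℝ) (x ξ : Euc n) :
    wpt (freeEv t ⇑φ₀) (freeEv t ⇑ψ) x ξ
      = Complex.exp (-(Complex.I) * (t : ℂ) * Complex.ofReal (‖ξ‖ ^ 2) / 2)
          * wpt ⇑φ₀ ⇑ψ (x - t • ξ) ξ := by
  change _ = freeSymbol t ξ * _
  rw [← coe_freeEvSchwartz, ← coe_freeEvSchwartz, wpt_eq_integral_FT, wpt_eq_integral_FT,
    mul_left_comm (freeSymbol t ξ), ← integral_const_mul (freeSymbol t ξ)]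
  congr 1
  refine integral_congr_ae (ae_of_all _ fun η => ?_)
  dsimp only
  rw [FT_freeEvSchwartz, FT_freeEvSchwartz, map_mul]
  linear_combination conj (FT φ₀ η) * FT ψ (η + ξ) *
    conj_freeSymbol_mul_freeSymbol_add_mul_cexp t x ξ η

/-- for nonzero Schwartz `φ₀`, Schwartz `ψ` and `t ∈ ℝ`,
`W_{e^{−itH₀}φ₀}[e^{−itH₀}ψ](x,ξ) = e^{−it|ξ|²/2} W_{φ₀}ψ(x − tξ, ξ)`. -/
theorem stmt8 {n : ℕ} (hn : 1 ≤ n) (φ₀ : SchwartzMap (Euc n) ℂ) (hφ₀ : φ₀ ≠ 0)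
    (ψ : SchwartzMap (Euc n) ℂ) (t : ℝ) (x ξ : Euc n) :
    wpt (freeEv t ⇑φ₀) (freeEv t ⇑ψ) x ξ
      = Complex.exp (-(Complex.I) * (t : ℂ) * Complex.ofReal (‖ξ‖ ^ 2) / 2)
          * wpt ⇑φ₀ ⇑ψ (x - t • ξ) ξ :=
  stmt8_general φ₀ ψ t x ξ
end
end
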